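/- arXiv:math/0003046 — 13 statements merged into one kernel-verified Lean document; each statement's English description precedes it below -/
import Mathlib

section
/- (Sharpness of the And rule.) For all real numbers x, y, z ∈ [0,1] satisfying max(0, x + y - 1) ≤ z ≤ min(x, y), there exist a probability space (Ω, P) and measurable events A, B, C ⊆ Ω with P(A) > 0, P(B|A) = x, P(C|A) = y, and P(B ∩ C | A) = z. -/
open MeasureTheory

/-- Conditional probability `P(E|H) = P(E ∩ H) / P(H)` as a real number. -/
noncomputable def condProb {Ω : Type*} [MeasurableSpace Ω] (P : Measure Ω) (E H : Set Ω) : ℝ :=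
  (P (E ∩ H)).toReal / (P H).toReal

/-- Sharpness of the And rule. -/
theorem and_rule_sharpness (x y z : ℝ)
    (hx : x ∈ Set.Icc (0 : ℝ) 1) (hy : y ∈ Set.Icc (0 : ℝ) 1) (hz : z ∈ Set.Icc (0 : ℝ) 1)
    (h1 : max 0 (x + y - 1) ≤ z) (h2 : z ≤ min x y) :
    ∃ (Ω : Type) (_ : MeasurableSpace Ω) (P : Measure Ω),
      IsProbabilityMeasure P ∧
        ∃ A B C : Set Ω,
          MeasurableSet A ∧ MeasurableSet B ∧ MeasurableSet C ∧ 0 < P A ∧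
            condProb P B A = x ∧ condProb P C A = y ∧ condProb P (B ∩ C) A = z := by
  obtain ⟨hz0, hz1⟩ := hz
  have hzx : z ≤ x := le_trans h2 (min_le_left _ _)
  have hzy : z ≤ y := le_trans h2 (min_le_right _ _)
  have hxyz : x + y - 1 ≤ z := le_trans (le_max_right _ _) h1
  have hxz : 0 ≤ x - z := by linarith
  have hyz : 0 ≤ y - z := by linarith
  have hw : 0 ≤ 1 - x - y + z := by linarith
  set P : Measure (Fin 4) :=
    ENNReal.ofReal z • Measure.dirac 0 + ENNReal.ofReal (x - z) • Measure.dirac 1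
      + ENNReal.ofReal (y - z) • Measure.dirac 2
      + ENNReal.ofReal (1 - x - y + z) • Measure.dirac 3 with hPdef
  have happ : ∀ s : Set (Fin 4), P s =
      ENNReal.ofReal z * s.indicator 1 0 + ENNReal.ofReal (x - z) * s.indicator 1 1
        + ENNReal.ofReal (y - z) * s.indicator 1 2
        + ENNReal.ofReal (1 - x - y + z) * s.indicator 1 3 := by
    intro s
    simp [hPdef, Measure.dirac_apply]
  have huniv : P Set.univ = 1 := by
    rw [happ]
    simp only [Set.indicator_univ, Pi.one_apply, mul_one]
    rw [← ENNReal.ofReal_add hz0 hxz, ← ENNReal.ofReal_add (by linarith) hyz,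
      ← ENNReal.ofReal_add (by linarith) hw]
    norm_num
    linarith
  have hne : ((2:Fin 4) ≠ 0) ∧ ((2:Fin 4) ≠ 1) ∧ ((3:Fin 4) ≠ 0) ∧ ((3:Fin 4) ≠ 1)
      ∧ ((3:Fin 4) ≠ 2) ∧ ((1:Fin 4) ≠ 2) := by decide
  obtain ⟨e1, e2, e3, e4, e5, e6⟩ := hne
  have hB : P {0, 1} = ENNReal.ofReal x := by
    rw [happ]
    simp only [Set.indicator_apply, Set.mem_inter_iff, Set.mem_insert_iff,
      Set.mem_singleton_iff, e1, e2, e3, e4, e5, e6]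
    norm_num
    rw [← ENNReal.ofReal_add hz0 hxz]
    norm_num
  have hC : P {0, 2} = ENNReal.ofReal y := by
    rw [happ]
    simp only [Set.indicator_apply, Set.mem_inter_iff, Set.mem_insert_iff,
      Set.mem_singleton_iff, e1, e2, e3, e4, e5, e6]
    norm_num
    rw [← ENNReal.ofReal_add hz0 hyz]
    norm_num
  have hBC : P ({0, 1} ∩ {0, 2} : Set (Fin 4)) = ENNReal.ofReal z := by
    rw [happ]
    simp only [Set.indicator_apply, Set.mem_inter_iff, Set.mem_insert_iff,
      Set.mem_singleton_iff, e1, e2, e3, e4, e5, e6]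
    norm_num
  refine ⟨Fin 4, inferInstance, P, ⟨huniv⟩,
    Set.univ, {0, 1}, {0, 2}, MeasurableSet.univ, by measurability, by measurability, ?_, ?_, ?_, ?_⟩
  · rw [huniv]; exact one_pos
  · rw [condProb, Set.inter_univ, huniv, hB]
    simp [ENNReal.toReal_ofReal (by linarith : (0:ℝ) ≤ x)]
  · rw [condProb, Set.inter_univ, huniv, hC]
    simp [ENNReal.toReal_ofReal (by linarith : (0:ℝ) ≤ y)]
  · rw [condProb, Set.inter_univ, huniv, hBC]
    simp [ENNReal.toReal_ofReal hz0]
end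

section
/- (Necessity direction of the Cautious Monotonicity rule.) Let P be a probability measure, and let A, B, C be measurable events with P(A ∩ B) > 0. Set x = P(C|A) and y = P(B|A). Then: (i) if x + y > 1 then P(C | A ∩ B) ≥ (x + y - 1)/y; (ii) if x < y then P(C | A ∩ B) ≤ x/y. -/
open MeasureTheory

/-! Both bounds follow from the chain rule `P(C|A ∩ B) P(B|A) = P(C ∩ B|A)`: the upper one
from `P(C ∩ B|A) ≤ P(C|A)`, the lower one from the Bonferroni inequality
`P(C|A) + P(B|A) - 1 ≤ P(C ∩ B|A)`. -/

namespace MeasureTheory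

variable {Ω : Type*} [MeasurableSpace Ω] {μ : Measure Ω} [IsFiniteMeasure μ]

theorem measureReal_add_measureReal_inter_le {s t u : Set Ω} (hsu : s ⊆ u)
    (ht : MeasurableSet t) : μ.real s + μ.real (t ∩ u) ≤ μ.real (s ∩ t) + μ.real u := by
  have hs : μ.real (s ∩ t) + μ.real (s \ t) = μ.real s := measureReal_inter_add_sdiff ht
  have hu : μ.real (u ∩ t) + μ.real (u \ t) = μ.real u := measureReal_inter_add_sdiff ht
  have hdiff : μ.real (s \ t) ≤ μ.real (u \ t) := measureReal_mono (Set.sdiff_subset_sdiff_left hsu)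
  rw [Set.inter_comm t u]
  linarith

end MeasureTheory

section condProb

variable {Ω : Type*} [MeasurableSpace Ω] (P : Measure Ω)

theorem condProb_eq_measureReal_div (E H : Set Ω) : condProb P E H = P.real (E ∩ H) / P.real H :=
  rfl

variable [IsFiniteMeasure P]

theorem condProb_pos {E H : Set Ω} (h : 0 < P (E ∩ H)) : 0 < condProb P E H := by
  have hH : 0 < P H := h.trans_le (measure_mono Set.inter_subset_right)
  exact div_pos (ENNReal.toReal_pos h.ne' (measure_ne_top P _))
    (ENNReal.toReal_pos hH.ne' (measure_ne_top P _))

theorem condProb_mono_left {E E' : Set Ω} (H : Set Ω) (hE : E ⊆ E') :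
    condProb P E H ≤ condProb P E' H :=
  div_le_div_of_nonneg_right (measureReal_mono (Set.inter_subset_inter_left H hE))
    measureReal_nonneg

theorem condProb_add_condProb_le {F : Set Ω} (E H : Set Ω) (hF : MeasurableSet F) :
    condProb P E H + condProb P F H ≤ 1 + condProb P (E ∩ F) H := by
  simp only [condProb_eq_measureReal_div]
  rcases (measureReal_nonneg (μ := P) (s := H)).eq_or_lt with hH | hH
  · simp [← hH]
  rw [← add_div, one_add_div hH.ne', div_le_div_iff_of_pos_right hH, Set.inter_right_comm,
    add_comm (P.real H)]
  exact measureReal_add_measureReal_inter_le Set.inter_subset_right hF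

theorem condProb_inter_mul_condProb (E F H : Set Ω) :
    condProb P E (H ∩ F) * condProb P F H = condProb P (E ∩ F) H := by
  simp only [condProb_eq_measureReal_div]
  rw [Set.inter_comm F H, Set.inter_assoc, Set.inter_comm F H]
  rcases (measureReal_nonneg (μ := P) (s := H ∩ F)).eq_or_lt with hHF | hHF
  · have hnull : P.real (E ∩ (H ∩ F)) = 0 :=
      measureReal_mono_null Set.inter_subset_right hHF.symm
    simp [← hHF, hnull]
  · rw [div_mul_div_cancel₀ hHF.ne']

end condProb

theorem cautious_monotonicity_necessity_general {Ω : Type*} [MeasurableSpace Ω] (P : Measure Ω)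
    [IsProbabilityMeasure P] (A B C : Set Ω)
    (hB : MeasurableSet B)
    (hPAB : 0 < P (A ∩ B)) :
    (condProb P C A + condProb P B A > 1 →
      condProb P C (A ∩ B) ≥ (condProb P C A + condProb P B A - 1) / condProb P B A) ∧
    (condProb P C A < condProb P B A →
      condProb P C (A ∩ B) ≤ condProb P C A / condProb P B A) := by
  have hy : 0 < condProb P B A := condProb_pos P (by rwa [Set.inter_comm])
  have chain := condProb_inter_mul_condProb P C B A
  refine ⟨fun _ => ?_, fun _ => ?_⟩
  · rw [ge_iff_le, div_le_iff₀ hy, chain]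
    linarith [condProb_add_condProb_le P C A hB]
  · rw [le_div_iff₀ hy, chain]
    exact condProb_mono_left P A Set.inter_subset_left

/-- Necessity direction of the Cautious Monotonicity rule. -/
theorem cautious_monotonicity_necessity {Ω : Type*} [MeasurableSpace Ω] (P : Measure Ω)
    [IsProbabilityMeasure P] (A B C : Set Ω)
    (hA : MeasurableSet A) (hB : MeasurableSet B) (hC : MeasurableSet C)
    (hPAB : 0 < P (A ∩ B)) :
    (condProb P C A + condProb P B A > 1 →
      condProb P C (A ∩ B) ≥ (condProb P C A + condProb P B A - 1) / condProb P B A) ∧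
    (condProb P C A < condProb P B A →
      condProb P C (A ∩ B) ≤ condProb P C A / condProb P B A) :=
  cautious_monotonicity_necessity_general P A B C hB hPAB
end

section
/- (Sharpness of the Cautious Monotonicity rule.) For all real numbers x, y ∈ [0,1] with y > 0, and every z ∈ [0,1] satisfying z' ≤ z ≤ z'', where z' = (x + y - 1)/y if x + y > 1 and z' = 0 if x + y ≤ 1, and z'' = x/y if x < y and z'' = 1 if x ≥ y, there exist a probability space (Ω, P) and measurable events A, B, C ⊆ Ω with P(A ∩ B) > 0, P(C|A) = x, P(B|A) = y, and P(C | A ∩ B) = z. -/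
open MeasureTheory

/-- Sharpness of the Cautious Monotonicity rule. -/
theorem cautious_monotonicity_sharpness (x y z : ℝ)
    (hx : x ∈ Set.Icc (0 : ℝ) 1) (hy : y ∈ Set.Icc (0 : ℝ) 1) (hy0 : 0 < y)
    (hz : z ∈ Set.Icc (0 : ℝ) 1)
    (h1 : (if x + y > 1 then (x + y - 1) / y else 0) ≤ z)
    (h2 : z ≤ (if x < y then x / y else 1)) :
    ∃ (Ω : Type) (_ : MeasurableSpace Ω) (P : Measure Ω),
      IsProbabilityMeasure P ∧
        ∃ A B C : Set Ω,
          MeasurableSet A ∧ MeasurableSet B ∧ MeasurableSet C ∧ 0 < P (A ∩ B) ∧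
            condProb P C A = x ∧ condProb P B A = y ∧ condProb P C (A ∩ B) = z := by
  obtain ⟨hx0, hx1⟩ := hx
  obtain ⟨hy0', hy1⟩ := hy
  obtain ⟨hz0, hz1⟩ := hz
  set a := z * y with ha_def
  set b := y - z * y with hb_def
  set c := x - z * y with hc_def
  set d := 1 - y - x + z * y with hd_def
  have hzy_le_x : z * y ≤ x := by
    by_cases h : x < y
    · rw [if_pos h] at h2
      calc z * y ≤ (x / y) * y := by nlinarith
        _ = x := by field_simp
    · rw [if_neg h] at h2
      push_neg at h
      nlinarith
  have hxy1 : x + y - 1 ≤ z * y := by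
    by_cases h : x + y > 1
    · rw [if_pos h] at h1
      have : (x + y - 1) / y * y ≤ z * y := by nlinarith
      calc x + y - 1 = (x + y - 1) / y * y := by field_simp
        _ ≤ z * y := this
    · push_neg at h
      nlinarith [mul_nonneg hz0 hy0']
  have ha0 : (0:ℝ) ≤ a := mul_nonneg hz0 hy0'
  have hb0 : (0:ℝ) ≤ b := by nlinarith
  have hc0 : (0:ℝ) ≤ c := by simp only [hc_def]; linarith
  have hd0 : (0:ℝ) ≤ d := by simp only [hd_def]; linarith
  classical
  refine ⟨Fin 4, inferInstance,
    (ENNReal.ofReal a) • Measure.dirac 0 + (ENNReal.ofReal b) • Measure.dirac 1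
      + (ENNReal.ofReal c) • Measure.dirac 2 + (ENNReal.ofReal d) • Measure.dirac 3,
    ?_, Set.univ, {0, 1}, {0, 2}, MeasurableSet.univ, (by measurability), (by measurability),
    ?_, ?_, ?_, ?_⟩
  · constructor
    simp [Measure.dirac_apply, Set.indicator_apply]
    rw [← ENNReal.ofReal_add ha0 hb0, ← ENNReal.ofReal_add (by linarith) hc0,
      ← ENNReal.ofReal_add (by linarith) hd0]
    have : a + b + c + d = 1 := by simp only [ha_def, hb_def, hc_def, hd_def]; ring
    rw [this]; simp
  · have h0 : Set.univ ∩ ({0, 1} : Set (Fin 4)) = {0, 1} := Set.univ_inter _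
    rw [h0]
    simp [Measure.dirac_apply, Set.indicator_apply]
    rcases lt_or_ge 0 a with h | h
    · exact Or.inl h
    · right; simp only [hb_def]; nlinarith
  · have h1 : ({0, 2} : Set (Fin 4)) ∩ Set.univ = {0, 2} := Set.inter_univ _
    rw [condProb, h1]
    simp [Measure.dirac_apply, Set.indicator_apply]
    rw [← ENNReal.ofReal_add ha0 hc0, ← ENNReal.ofReal_add ha0 hb0,
      ← ENNReal.ofReal_add (by linarith) hc0, ← ENNReal.ofReal_add (by linarith) hd0,
      ENNReal.toReal_ofReal (by linarith), ENNReal.toReal_ofReal (by linarith)]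
    have e1 : a + c = x := by simp only [ha_def, hc_def]; ring
    have e2 : a + b + c + d = 1 := by simp only [ha_def, hb_def, hc_def, hd_def]; ring
    rw [e1, e2, div_one]
  · have h1 : ({0, 1} : Set (Fin 4)) ∩ Set.univ = {0, 1} := Set.inter_univ _
    rw [condProb, h1]
    simp [Measure.dirac_apply, Set.indicator_apply]
    rw [← ENNReal.ofReal_add ha0 hb0,
      ← ENNReal.ofReal_add (by linarith) hc0, ← ENNReal.ofReal_add (by linarith) hd0,
      ENNReal.toReal_ofReal (by linarith), ENNReal.toReal_ofReal (by linarith)]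
    have e1 : a + b = y := by simp only [ha_def, hb_def]; ring
    have e2 : a + b + c + d = 1 := by simp only [ha_def, hb_def, hc_def, hd_def]; ring
    rw [e2, e1, div_one]
  · have h0 : Set.univ ∩ ({0, 1} : Set (Fin 4)) = {0, 1} := Set.univ_inter _
    have h1 : ({0, 2} : Set (Fin 4)) ∩ {0, 1} = {0} := by
      ext i; fin_cases i <;> simp
    rw [condProb, h0, h1]
    simp [Measure.dirac_apply, Set.indicator_apply]
    rw [← ENNReal.ofReal_add ha0 hb0, ENNReal.toReal_ofReal ha0,
      ENNReal.toReal_ofReal (by linarith)]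
    have e1 : a + b = y := by simp only [ha_def, hb_def]; ring
    rw [e1, ha_def, mul_div_assoc, div_self (ne_of_gt hy0), mul_one]
end

section
/- (Necessity direction of the Or rule.) Let P be a probability measure, and let A, B, C be measurable events with P(A) > 0 and P(B) > 0. Set x = P(C|A) and y = P(C|B). Then: (i) if (x, y) ≠ (0, 0) then P(C | A ∪ B) ≥ x·y/(x + y - x·y); (ii) if (x, y) ≠ (1, 1) then P(C | A ∪ B) ≤ (x + y - 2·x·y)/(1 - x·y). -/
open MeasureTheory

lemma toReal_union_inter {Ω : Type*} [MeasurableSpace Ω] (P : Measure Ω)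
    [IsProbabilityMeasure P] (s t : Set Ω) (ht : MeasurableSet t) :
    (P (s ∪ t)).toReal = (P s).toReal + (P t).toReal - (P (s ∩ t)).toReal := by
  have h := measure_union_add_inter (μ := P) s ht
  have h1 : (P (s ∪ t)).toReal + (P (s ∩ t)).toReal = (P s).toReal + (P t).toReal := by
    rw [← ENNReal.toReal_add (measure_ne_top _ _) (measure_ne_top _ _),
        ← ENNReal.toReal_add (measure_ne_top _ _) (measure_ne_top _ _), h]
  linarith

lemma key_ineq (x y a b n m N D : ℝ) (hx : 0 < x) (hy : 0 < y) (hx1 : x ≤ 1) (hy1 : y ≤ 1)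
    (hn0 : 0 ≤ n) (hnca : n ≤ x * a) (hncb : n ≤ y * b) (hnm : n ≤ m)
    (hN : N = x * a + y * b - n) (hD : D = a + b - m) (hDpos : 0 < D) :
    x * y / (x + y - x * y) ≤ N / D := by
  have hden : 0 < x + y - x * y := by nlinarith
  rw [div_le_div_iff₀ hden hDpos]
  have hDle : D ≤ a + b - n := by linarith
  have key2 : x * y * (a + b - n) ≤ N * (x + y - x * y) := by
    nlinarith [mul_nonneg (mul_nonneg hx.le (sub_nonneg.2 hy1)) (sub_nonneg.2 hnca),
      mul_nonneg (mul_nonneg hy.le (sub_nonneg.2 hx1)) (sub_nonneg.2 hncb)]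
  nlinarith [mul_le_mul_of_nonneg_left hDle (mul_pos hx hy).le]

lemma or_lower {Ω : Type*} [MeasurableSpace Ω] (P : Measure Ω)
    [IsProbabilityMeasure P] (A B C : Set Ω)
    (hA : MeasurableSet A) (hB : MeasurableSet B) (hC : MeasurableSet C)
    (hPA : 0 < P A) (hPB : 0 < P B)
    (h : ¬ (condProb P C A = 0 ∧ condProb P C B = 0)) :
    condProb P C (A ∪ B) ≥
      condProb P C A * condProb P C B /
        (condProb P C A + condProb P C B - condProb P C A * condProb P C B) := by
  set a : ℝ := (P A).toReal with ha_def
  set b : ℝ := (P B).toReal with hb_def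
  set ca : ℝ := (P (C ∩ A)).toReal with hca_def
  set cb : ℝ := (P (C ∩ B)).toReal with hcb_def
  set m : ℝ := (P (A ∩ B)).toReal with hm_def
  set n : ℝ := (P (C ∩ (A ∩ B))).toReal with hn_def
  have ha : 0 < a := ENNReal.toReal_pos hPA.ne' (measure_ne_top _ _)
  have hb : 0 < b := ENNReal.toReal_pos hPB.ne' (measure_ne_top _ _)
  have hmono : ∀ s t : Set Ω, s ⊆ t → (P s).toReal ≤ (P t).toReal := fun s t hst =>
    ENNReal.toReal_mono (measure_ne_top _ _) (measure_mono hst)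
  have hca_a : ca ≤ a := hmono _ _ Set.inter_subset_right
  have hcb_b : cb ≤ b := hmono _ _ Set.inter_subset_right
  have hca0 : 0 ≤ ca := ENNReal.toReal_nonneg
  have hcb0 : 0 ≤ cb := ENNReal.toReal_nonneg
  have hn0 : 0 ≤ n := ENNReal.toReal_nonneg
  have hn_ca : n ≤ ca := hmono _ _ (Set.inter_subset_inter_right _ Set.inter_subset_left)
  have hn_cb : n ≤ cb := hmono _ _ (Set.inter_subset_inter_right _ Set.inter_subset_right)
  have hn_m : n ≤ m := hmono _ _ Set.inter_subset_right
  have hD : (P (A ∪ B)).toReal = a + b - m := toReal_union_inter P A B hB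
  have hN : (P (C ∩ (A ∪ B))).toReal = ca + cb - n := by
    have h1 : C ∩ (A ∪ B) = (C ∩ A) ∪ (C ∩ B) := Set.inter_union_distrib_left C A B
    have h2 : (C ∩ A) ∩ (C ∩ B) = C ∩ (A ∩ B) := by ext ω; simp; tauto
    rw [h1, toReal_union_inter P _ _ (hC.inter hB), h2]
  have hDpos : 0 < a + b - m := by
    have := hmono A (A ∪ B) Set.subset_union_left
    rw [hD] at this; linarith
  have hx_def : condProb P C A = ca / a := rfl
  have hy_def : condProb P C B = cb / b := rfl
  have hz_def : condProb P C (A ∪ B) = (ca + cb - n) / (a + b - m) := by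
    rw [condProb, hN, hD]
  rw [hx_def, hy_def, hz_def]
  by_cases hca : ca = 0
  · have hrhs : ca / a * (cb / b) / (ca / a + cb / b - ca / a * (cb / b)) = 0 := by
      simp [hca]
    rw [hrhs]
    exact div_nonneg (by linarith) hDpos.le
  · by_cases hcb : cb = 0
    · have hrhs : ca / a * (cb / b) / (ca / a + cb / b - ca / a * (cb / b)) = 0 := by
        simp [hcb]
      rw [hrhs]
      exact div_nonneg (by linarith) hDpos.le
    · have hx : 0 < ca / a := div_pos (lt_of_le_of_ne hca0 (Ne.symm hca)) ha
      have hy : 0 < cb / b := div_pos (lt_of_le_of_ne hcb0 (Ne.symm hcb)) hb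
      exact key_ineq (ca / a) (cb / b) a b n m _ _ hx hy
        (div_le_one_of_le₀ hca_a ha.le) (div_le_one_of_le₀ hcb_b hb.le) hn0
        (by rw [div_mul_cancel₀ _ ha.ne']; exact hn_ca)
        (by rw [div_mul_cancel₀ _ hb.ne']; exact hn_cb) hn_m
        (by rw [div_mul_cancel₀ _ ha.ne', div_mul_cancel₀ _ hb.ne']) rfl hDpos

lemma condProb_compl {Ω : Type*} [MeasurableSpace Ω] (P : Measure Ω)
    [IsProbabilityMeasure P] (C S : Set Ω) (hC : MeasurableSet C)
    (hPS : 0 < P S) : condProb P Cᶜ S = 1 - condProb P C S := by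
  have hS : 0 < (P S).toReal := ENNReal.toReal_pos hPS.ne' (measure_ne_top _ _)
  have h : P (S ∩ C) + P (S \ C) = P S := measure_inter_add_diff S hC
  have h1 : (P (C ∩ S)).toReal + (P (Cᶜ ∩ S)).toReal = (P S).toReal := by
    rw [Set.inter_comm C S, Set.inter_comm Cᶜ S, ← Set.diff_eq,
        ← ENNReal.toReal_add (measure_ne_top _ _) (measure_ne_top _ _), h]
  rw [condProb, condProb]
  field_simp
  linarith

lemma condProb_nonneg {Ω : Type*} [MeasurableSpace Ω] (P : Measure Ω) (E H : Set Ω) :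
    0 ≤ condProb P E H :=
  div_nonneg ENNReal.toReal_nonneg ENNReal.toReal_nonneg

lemma condProb_le_one {Ω : Type*} [MeasurableSpace Ω] (P : Measure Ω)
    [IsProbabilityMeasure P] (E H : Set Ω) (hPH : 0 < P H) : condProb P E H ≤ 1 := by
  have hH : 0 < (P H).toReal := ENNReal.toReal_pos hPH.ne' (measure_ne_top _ _)
  exact div_le_one_of_le₀
    (ENNReal.toReal_mono (measure_ne_top _ _) (measure_mono Set.inter_subset_right)) hH.le

/-- Necessity direction of the Or rule. -/
theorem or_rule_necessity {Ω : Type*} [MeasurableSpace Ω] (P : Measure Ω)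
    [IsProbabilityMeasure P] (A B C : Set Ω)
    (hA : MeasurableSet A) (hB : MeasurableSet B) (hC : MeasurableSet C)
    (hPA : 0 < P A) (hPB : 0 < P B) :
    ((condProb P C A, condProb P C B) ≠ (0, 0) →
      condProb P C (A ∪ B) ≥
        condProb P C A * condProb P C B /
          (condProb P C A + condProb P C B - condProb P C A * condProb P C B)) ∧
    ((condProb P C A, condProb P C B) ≠ (1, 1) →
      condProb P C (A ∪ B) ≤
        (condProb P C A + condProb P C B - 2 * (condProb P C A * condProb P C B)) /
          (1 - condProb P C A * condProb P C B)) := by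
  set x := condProb P C A with hx_def
  set y := condProb P C B with hy_def
  have hx0 : 0 ≤ x := condProb_nonneg P C A
  have hy0 : 0 ≤ y := condProb_nonneg P C B
  have hx1 : x ≤ 1 := condProb_le_one P C A hPA
  have hy1 : y ≤ 1 := condProb_le_one P C B hPB
  have hPAB : 0 < P (A ∪ B) := lt_of_lt_of_le hPA (measure_mono Set.subset_union_left)
  constructor
  · intro h
    have h' : ¬ (x = 0 ∧ y = 0) := by
      intro ⟨h1, h2⟩; exact h (by rw [h1, h2])
    exact or_lower P A B C hA hB hC hPA hPB h'
  · intro h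
    have hcA : condProb P Cᶜ A = 1 - x := condProb_compl P C A hC hPA
    have hcB : condProb P Cᶜ B = 1 - y := condProb_compl P C B hC hPB
    have hcAB : condProb P Cᶜ (A ∪ B) = 1 - condProb P C (A ∪ B) :=
      condProb_compl P C (A ∪ B) hC hPAB
    have h' : ¬ (condProb P Cᶜ A = 0 ∧ condProb P Cᶜ B = 0) := by
      rw [hcA, hcB]
      intro ⟨h1, h2⟩
      exact h (by rw [show x = 1 by linarith, show y = 1 by linarith])
    have hlow := or_lower P A B Cᶜ hA hB hC.compl hPA hPB h'
    rw [hcA, hcB, hcAB] at hlow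
    have hne : x ≠ 1 ∨ y ≠ 1 := by
      by_contra hcon
      push_neg at hcon
      exact h (by rw [hcon.1, hcon.2])
    have h1xy : 0 < 1 - x * y := by
      rcases hne with hne | hne
      · have : x < 1 := lt_of_le_of_ne hx1 hne
        nlinarith
      · have : y < 1 := lt_of_le_of_ne hy1 hne
        nlinarith
    have hden_eq : (1 - x) + (1 - y) - (1 - x) * (1 - y) = 1 - x * y := by ring
    rw [ge_iff_le, hden_eq, div_le_iff₀ h1xy] at hlow
    rw [le_div_iff₀ h1xy]
    nlinarith
end

section
/- (Sharpness of the Cut rule.) For all real numbers x, y ∈ [0,1] with y > 0 and every z ∈ [0,1] satisfying x·y ≤ z ≤ x·y + 1 - y, there exist a probability space (Ω, P) and measurable events A, B, C ⊆ Ω with P(A ∩ B) > 0, P(C | A ∩ B) = x, P(B|A) = y, and P(C|A) = z. -/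
open MeasureTheory

lemma meas_all (s : Set (Bool × Bool)) : MeasurableSet s :=
  s.to_countable.measurableSet

/-- Sharpness of the Cut rule. -/
theorem cut_rule_sharpness (x y z : ℝ)
    (hx : x ∈ Set.Icc (0 : ℝ) 1) (hy : y ∈ Set.Icc (0 : ℝ) 1) (hy0 : 0 < y)
    (hz : z ∈ Set.Icc (0 : ℝ) 1)
    (h1 : x * y ≤ z) (h2 : z ≤ x * y + 1 - y) :
    ∃ (Ω : Type) (_ : MeasurableSpace Ω) (P : Measure Ω),
      IsProbabilityMeasure P ∧
        ∃ A B C : Set Ω,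
          MeasurableSet A ∧ MeasurableSet B ∧ MeasurableSet C ∧ 0 < P (A ∩ B) ∧
            condProb P C (A ∩ B) = x ∧ condProb P B A = y ∧ condProb P C A = z := by
  obtain ⟨hx0, hx1⟩ := hx
  obtain ⟨hy0', hy1⟩ := hy
  obtain ⟨hz0, hz1⟩ := hz
  set a := x * y with ha
  set b := y - x * y with hb
  set c := z - x * y with hc
  set d := 1 - y - z + x * y with hd
  have ha0 : 0 ≤ a := mul_nonneg hx0 hy0.le
  have hb0 : 0 ≤ b := by nlinarith
  have hc0 : 0 ≤ c := by linarith
  have hd0 : 0 ≤ d := by linarith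
  set P : Measure (Bool × Bool) :=
    ENNReal.ofReal a • Measure.dirac (true, true) +
    ENNReal.ofReal b • Measure.dirac (true, false) +
    ENNReal.ofReal c • Measure.dirac (false, true) +
    ENNReal.ofReal d • Measure.dirac (false, false) with hP
  set A : Set (Bool × Bool) := Set.univ with hA
  set B : Set (Bool × Bool) := {p | p.1 = true} with hB
  set C : Set (Bool × Bool) := {p | p.2 = true} with hC
  have hPuniv : P Set.univ = ENNReal.ofReal 1 := by
    rw [hP]
    simp only [Measure.add_apply, Measure.smul_apply, smul_eq_mul,
      Measure.dirac_apply' _ (meas_all _), Set.indicator_of_mem (Set.mem_univ _),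
      Pi.one_apply, mul_one]
    rw [← ENNReal.ofReal_add ha0 hb0, ← ENNReal.ofReal_add (by linarith) hc0,
      ← ENNReal.ofReal_add (by linarith) hd0]
    congr 1; ring
  have hPB : P B = ENNReal.ofReal y := by
    rw [hP]
    simp only [Measure.add_apply, Measure.smul_apply, smul_eq_mul,
      Measure.dirac_apply' _ (meas_all _)]
    rw [Set.indicator_of_mem (by simp [hB]), Set.indicator_of_mem (by simp [hB]),
      Set.indicator_of_notMem (by simp [hB]), Set.indicator_of_notMem (by simp [hB])]
    simp only [Pi.one_apply, mul_one, mul_zero, add_zero]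
    rw [← ENNReal.ofReal_add ha0 hb0]
    congr 1; ring
  have hPCB : P (C ∩ B) = ENNReal.ofReal a := by
    rw [hP]
    simp only [Measure.add_apply, Measure.smul_apply, smul_eq_mul,
      Measure.dirac_apply' _ (meas_all _)]
    rw [Set.indicator_of_mem (by simp [hB, hC]), Set.indicator_of_notMem (by simp [hB, hC]),
      Set.indicator_of_notMem (by simp [hB, hC]), Set.indicator_of_notMem (by simp [hB, hC])]
    simp
  have hPC : P C = ENNReal.ofReal z := by
    rw [hP]
    simp only [Measure.add_apply, Measure.smul_apply, smul_eq_mul,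
      Measure.dirac_apply' _ (meas_all _)]
    rw [Set.indicator_of_mem (by simp [hC]), Set.indicator_of_notMem (by simp [hC]),
      Set.indicator_of_mem (by simp [hC]), Set.indicator_of_notMem (by simp [hC])]
    simp only [Pi.one_apply, mul_one, mul_zero, add_zero, zero_add]
    rw [← ENNReal.ofReal_add ha0 hc0]
    congr 1; ring
  have hprob : IsProbabilityMeasure P := ⟨by rw [hPuniv]; simp⟩
  refine ⟨Bool × Bool, inferInstance, P, hprob, A, B, C, meas_all _, meas_all _, meas_all _,
    ?_, ?_, ?_, ?_⟩
  · rw [hA, Set.univ_inter, hPB]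
    simpa using hy0
  · rw [condProb, hA, Set.univ_inter, hPCB, hPB, ENNReal.toReal_ofReal ha0,
      ENNReal.toReal_ofReal hy0.le, ha]
    field_simp
  · rw [condProb, hA, Set.inter_univ, hPB, hPuniv, ENNReal.toReal_ofReal hy0.le,
      ENNReal.toReal_ofReal zero_le_one, div_one]
  · rw [condProb, hA, Set.inter_univ, hPC, hPuniv, ENNReal.toReal_ofReal hz0,
      ENNReal.toReal_ofReal zero_le_one, div_one]
end

section
/- (Necessity direction of the S rule.) Let P be a probability measure, and let A, B, C be measurable events with P(A ∩ B) > 0. Then P(C | A ∩ B) ≤ P(Bᶜ ∪ C | A), where Bᶜ denotes the complement of B. -/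
open MeasureTheory

/-- Necessity direction of the S rule. -/
theorem s_rule_necessity {Ω : Type*} [MeasurableSpace Ω] (P : Measure Ω)
    [IsProbabilityMeasure P] (A B C : Set Ω)
    (hA : MeasurableSet A) (hB : MeasurableSet B) (hC : MeasurableSet C)
    (hPAB : 0 < P (A ∩ B)) :
    condProb P C (A ∩ B) ≤ condProb P (Bᶜ ∪ C) A := by
  unfold condProb
  set x := (P (C ∩ (A ∩ B))).toReal with hx
  set y := (P (A ∩ B)).toReal with hy
  set a := (P A).toReal with ha
  set z := (P ((Bᶜ ∪ C) ∩ A)).toReal with hz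
  have hfin : ∀ s : Set Ω, P s ≠ ⊤ := fun s => measure_ne_top P s
  have hy0 : 0 < y := ENNReal.toReal_pos hPAB.ne' (hfin _)
  have hya : y ≤ a := ENNReal.toReal_mono (hfin _) (measure_mono Set.inter_subset_left)
  have hxy : x ≤ y := ENNReal.toReal_mono (hfin _) (measure_mono Set.inter_subset_right)
  have ha0 : 0 < a := lt_of_lt_of_le hy0 hya
  -- P A = P (A ∩ B) + P (A \ B)
  have hsplit : P (A ∩ B) + P (A \ B) = P A := measure_inter_add_diff A hB
  have hsplitR : y + (P (A \ B)).toReal = a := by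
    rw [hy, ha, ← hsplit, ENNReal.toReal_add (hfin _) (hfin _)]
  -- disjoint union lower bound
  have hdisj : Disjoint (A \ B) (C ∩ (A ∩ B)) := by
    apply Set.disjoint_left.mpr
    rintro w ⟨_, hwB⟩ ⟨_, _, hwB'⟩
    exact hwB hwB'
  have hunion : P (A \ B) + P (C ∩ (A ∩ B)) = P ((A \ B) ∪ (C ∩ (A ∩ B))) :=
    (measure_union hdisj ((hC.inter (hA.inter hB)))).symm
  have hsub : (A \ B) ∪ (C ∩ (A ∩ B)) ⊆ (Bᶜ ∪ C) ∩ A := by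
    rintro w (⟨hwA, hwB⟩ | ⟨hwC, hwA, _⟩)
    · exact ⟨Or.inl hwB, hwA⟩
    · exact ⟨Or.inr hwC, hwA⟩
  have hzlb : (P (A \ B)).toReal + x ≤ z := by
    rw [hx, hz, ← ENNReal.toReal_add (hfin _) (hfin _), hunion]
    exact ENNReal.toReal_mono (hfin _) (measure_mono hsub)
  rw [div_le_div_iff₀ hy0 ha0]
  nlinarith [mul_nonneg (sub_nonneg.mpr hya) (sub_nonneg.mpr hxy),
    ENNReal.toReal_nonneg (a := P (A \ B))]
end

section
/- (Necessity direction of the disjunctive Weak Rational Monotony rule.) Let P be a probability measure, and let A, B, C be measurable events with P(A ∩ B) > 0. Set x = P(C|A) and y = P(Bᶜ|A), where Bᶜ denotes the complement of B. Then: (i) if x > y then P(C | A ∩ B) ≥ (x - y)/(1 - y); (ii) if x + y < 1 then P(C | A ∩ B) ≤ x/(1 - y). -/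
open MeasureTheory

/-- Necessity direction of the disjunctive Weak Rational Monotony rule. -/
theorem dWRM_necessity {Ω : Type*} [MeasurableSpace Ω] (P : Measure Ω)
    [IsProbabilityMeasure P] (A B C : Set Ω)
    (hA : MeasurableSet A) (hB : MeasurableSet B) (hC : MeasurableSet C)
    (hPAB : 0 < P (A ∩ B)) :
    (condProb P C A > condProb P Bᶜ A →
      condProb P C (A ∩ B) ≥ (condProb P C A - condProb P Bᶜ A) / (1 - condProb P Bᶜ A)) ∧
    (condProb P C A + condProb P Bᶜ A < 1 →
      condProb P C (A ∩ B) ≤ condProb P C A / (1 - condProb P Bᶜ A)) := by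
  have hPA : 0 < P A := lt_of_lt_of_le hPAB (measure_mono Set.inter_subset_left)
  have hpAB : 0 < (P (A ∩ B)).toReal := ENNReal.toReal_pos hPAB.ne' (measure_ne_top P _)
  have hpA : 0 < (P A).toReal := ENNReal.toReal_pos hPA.ne' (measure_ne_top P _)
  have hBcA : Bᶜ ∩ A = A \ B := by ext x; simp [Set.mem_diff, and_comm]
  have h1 : (P (A ∩ B)).toReal + (P (A \ B)).toReal = (P A).toReal := by
    rw [← ENNReal.toReal_add (measure_ne_top P _) (measure_ne_top P _),
      measure_inter_add_diff A hB]
  have h2 : (P (C ∩ A ∩ B)).toReal + (P ((C ∩ A) \ B)).toReal = (P (C ∩ A)).toReal := by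
    rw [← ENNReal.toReal_add (measure_ne_top P _) (measure_ne_top P _),
      measure_inter_add_diff (C ∩ A) hB]
  have h3 : (P ((C ∩ A) \ B)).toReal ≤ (P (A \ B)).toReal :=
    ENNReal.toReal_mono (measure_ne_top P _)
      (measure_mono (fun x hx => ⟨hx.1.2, hx.2⟩))
  have h4 : (0:ℝ) ≤ (P ((C ∩ A) \ B)).toReal := ENNReal.toReal_nonneg
  have hCAB : C ∩ (A ∩ B) = C ∩ A ∩ B := (Set.inter_assoc C A B).symm
  simp only [condProb, hBcA, hCAB]
  set a := (P A).toReal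
  set ab := (P (A ∩ B)).toReal
  set adb := (P (A \ B)).toReal
  set ca := (P (C ∩ A)).toReal
  set cab := (P (C ∩ A ∩ B)).toReal
  have hy : 1 - adb / a = ab / a := by field_simp; linarith
  have hkey1 : ca - adb ≤ cab := by linarith
  have hkey2 : cab ≤ ca := by linarith
  constructor
  · intro _
    rw [hy]
    have heq : (ca / a - adb / a) / (ab / a) = (ca - adb) / ab := by
      field_simp
    rw [heq]
    gcongr
  · intro _
    rw [hy]
    have heq : (ca / a) / (ab / a) = ca / ab := by
      field_simp
    rw [heq]
    gcongr
end

section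
/- (Sharpness of the disjunctive Weak Rational Monotony rule.) For all real numbers x, y ∈ [0,1] with y < 1, and every z ∈ [0,1] satisfying z' ≤ z ≤ z'', where z' = (x - y)/(1 - y) if x > y and z' = 0 if x ≤ y, and z'' = x/(1 - y) if x + y < 1 and z'' = 1 if x + y ≥ 1, there exist a probability space (Ω, P) and measurable events A, B, C ⊆ Ω with P(A ∩ B) > 0, P(C|A) = x, P(Bᶜ|A) = y, and P(C | A ∩ B) = z, where Bᶜ denotes the complement of B. -/
/-!
Take `A = Ω`. A probability space carrying two events `B, C` is then determined, as far as the
statement is concerned, by the masses of the four cells of `B` and `C`; the requirements force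
`P(B ∩ C) = z(1 - y)`, `P(B \ C) = 1 - y - z(1 - y)`, `P(C \ B) = x - z(1 - y)` and
`P(Bᶜ ∩ Cᶜ) = y - x + z(1 - y)`, and the bounds `z' ≤ z ≤ z''` say exactly that these are
nonnegative. Any such table of masses is realized by a probability on `Bool × Bool`.
-/

open MeasureTheory

theorem condProb_univ {Ω : Type*} [MeasurableSpace Ω] (P : Measure Ω) [IsProbabilityMeasure P]
    (E : Set Ω) : condProb P E Set.univ = P.real E := by
  simp [condProb, measureReal_def]

theorem measureReal_inter_add_inter_compl {Ω : Type*} [MeasurableSpace Ω] (P : Measure Ω)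
    [IsFiniteMeasure P] (s : Set Ω) {t : Set Ω} (ht : MeasurableSet t) :
    P.real (s ∩ t) + P.real (s ∩ tᶜ) = P.real s :=
  measureReal_inter_add_sdiff ht

theorem exists_isProbabilityMeasure_measureReal_singleton {α : Type*} [Fintype α]
    [MeasurableSpace α] [MeasurableSingletonClass α] (w : α → ℝ) (hw : ∀ i, 0 ≤ w i)
    (hsum : ∑ i, w i = 1) :
    ∃ P : Measure α, IsProbabilityMeasure P ∧ ∀ i, P.real {i} = w i := by
  have hsum' : ∑ i, ENNReal.ofReal (w i) = 1 := by
    rw [← ENNReal.ofReal_sum_of_nonneg fun i _ ↦ hw i, hsum, ENNReal.ofReal_one]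
  refine ⟨(PMF.ofFintype _ hsum').toMeasure, inferInstance, fun i ↦ ?_⟩
  rw [measureReal_def, PMF.toMeasure_apply_singleton _ _ (measurableSet_singleton i),
    PMF.ofFintype_apply, ENNReal.toReal_ofReal (hw i)]

theorem exists_events_of_cell_masses (a b c d : ℝ) (ha : 0 ≤ a) (hb : 0 ≤ b) (hc : 0 ≤ c)
    (hd : 0 ≤ d) (hsum : a + b + c + d = 1) :
    ∃ (Ω : Type) (_ : MeasurableSpace Ω) (P : Measure Ω), IsProbabilityMeasure P ∧
      ∃ B C : Set Ω, MeasurableSet B ∧ MeasurableSet C ∧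
        P.real (B ∩ C) = a ∧ P.real (B ∩ Cᶜ) = b ∧ P.real (Bᶜ ∩ C) = c ∧
          P.real (Bᶜ ∩ Cᶜ) = d := by
  let w : Bool × Bool → ℝ
    | (true, true) => a
    | (true, false) => b
    | (false, true) => c
    | (false, false) => d
  obtain ⟨P, hP, hPw⟩ := exists_isProbabilityMeasure_measureReal_singleton w
    (by rintro ⟨_ | _, _ | _⟩ <;> assumption) (by simp [w, Fintype.sum_prod_type]; linarith)
  have cell {s : Set (Bool × Bool)} (ω) (hs : s = {ω}) : P.real s = w ω := hs ▸ hPw ω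
  refine ⟨_, _, P, hP, {ω | ω.1}, {ω | ω.2}, .of_discrete, .of_discrete, cell (true, true) ?_,
    cell (true, false) ?_, cell (false, true) ?_, cell (false, false) ?_⟩ <;>
  ext ⟨_ | _, _ | _⟩ <;> simp

theorem sub_le_mul_one_sub_of_ite_le {x y z : ℝ} (hy1 : y < 1) (hz0 : 0 ≤ z)
    (h : (if x > y then (x - y) / (1 - y) else 0) ≤ z) : x - y ≤ z * (1 - y) := by
  split_ifs at h with hxy
  · exact (div_le_iff₀ (by linarith)).mp h
  · nlinarith

theorem mul_one_sub_le_of_le_ite {x y z : ℝ} (hy1 : y < 1) (hz1 : z ≤ 1)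
    (h : z ≤ (if x + y < 1 then x / (1 - y) else 1)) : z * (1 - y) ≤ x := by
  split_ifs at h with hxy
  · exact (le_div_iff₀ (by linarith)).mp h
  · nlinarith

theorem dWRM_sharpness_general (x y z : ℝ)
    (hy1 : y < 1)
    (hz : z ∈ Set.Icc (0 : ℝ) 1)
    (h1 : (if x > y then (x - y) / (1 - y) else 0) ≤ z)
    (h2 : z ≤ (if x + y < 1 then x / (1 - y) else 1)) :
    ∃ (Ω : Type) (_ : MeasurableSpace Ω) (P : Measure Ω),
      IsProbabilityMeasure P ∧
        ∃ A B C : Set Ω,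
          MeasurableSet A ∧ MeasurableSet B ∧ MeasurableSet C ∧ 0 < P (A ∩ B) ∧
            condProb P C A = x ∧ condProb P Bᶜ A = y ∧ condProb P C (A ∩ B) = z := by
  obtain ⟨hz0, hz1⟩ := hz
  have hlow := sub_le_mul_one_sub_of_ite_le hy1 hz0 h1
  have hup := mul_one_sub_le_of_le_ite hy1 hz1 h2
  obtain ⟨Ω, _, P, hP, B, C, hB, hC, hBC, hBC', hBcC, hBcC'⟩ :=
    exists_events_of_cell_masses (z * (1 - y)) (1 - y - z * (1 - y)) (x - z * (1 - y))
      (y - (x - z * (1 - y))) (mul_nonneg hz0 (by linarith)) (by nlinarith) (by linarith)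
      (by linarith) (by ring)
  have hPB : P.real B = 1 - y := by
    rw [← measureReal_inter_add_inter_compl P B hC, hBC, hBC']; ring
  have hPC : P.real C = x := by
    rw [← measureReal_inter_add_inter_compl P C hB, Set.inter_comm, hBC, Set.inter_comm, hBcC]
    ring
  have hPBc : P.real Bᶜ = y := by
    rw [← measureReal_inter_add_inter_compl P Bᶜ hC, hBcC, hBcC']; ring
  refine ⟨Ω, _, P, hP, Set.univ, B, C, .univ, hB, hC, ?_, ?_, ?_, ?_⟩
  · rw [Set.univ_inter]
    exact (ENNReal.toReal_pos_iff.mp (hPB.symm ▸ sub_pos.mpr hy1 : 0 < P.real B)).1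
  · rw [condProb_univ, hPC]
  · rw [condProb_univ, hPBc]
  · rw [condProb, Set.univ_inter, ← measureReal_def, ← measureReal_def, Set.inter_comm, hBC, hPB]
    exact mul_div_cancel_right₀ z (sub_pos.mpr hy1).ne'

/-- Sharpness of the disjunctive Weak Rational Monotony rule. -/
theorem dWRM_sharpness (x y z : ℝ)
    (hx : x ∈ Set.Icc (0 : ℝ) 1) (hy : y ∈ Set.Icc (0 : ℝ) 1) (hy1 : y < 1)
    (hz : z ∈ Set.Icc (0 : ℝ) 1)
    (h1 : (if x > y then (x - y) / (1 - y) else 0) ≤ z)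
    (h2 : z ≤ (if x + y < 1 then x / (1 - y) else 1)) :
    ∃ (Ω : Type) (_ : MeasurableSpace Ω) (P : Measure Ω),
      IsProbabilityMeasure P ∧
        ∃ A B C : Set Ω,
          MeasurableSet A ∧ MeasurableSet B ∧ MeasurableSet C ∧ 0 < P (A ∩ B) ∧
            condProb P C A = x ∧ condProb P Bᶜ A = y ∧ condProb P C (A ∩ B) = z :=
  dWRM_sharpness_general x y z hy1 hz h1 h2
end

section
/- (Cautious Monotonicity rule with ε-values.) Let P be a probability measure, let A, B, C be measurable events with P(A ∩ B) > 0, and let ε₁ ∈ [0,1], ε₂ ∈ [0,1). If P(C|A) ≥ 1 - ε₁ and P(B|A) ≥ 1 - ε₂, then P(C | A ∩ B) ≥ 1 - ε₁/(1 - ε₂). -/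
open MeasureTheory

/-- Cautious Monotonicity rule with ε-values. -/
theorem cautious_monotonicity_eps {Ω : Type*} [MeasurableSpace Ω] (P : Measure Ω)
    [IsProbabilityMeasure P] (A B C : Set Ω)
    (hA : MeasurableSet A) (hB : MeasurableSet B) (hC : MeasurableSet C)
    (hPAB : 0 < P (A ∩ B)) (ε₁ ε₂ : ℝ)
    (hε₁ : ε₁ ∈ Set.Icc (0 : ℝ) 1) (hε₂ : ε₂ ∈ Set.Ico (0 : ℝ) 1)
    (h1 : condProb P C A ≥ 1 - ε₁) (h2 : condProb P B A ≥ 1 - ε₂) :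
    condProb P C (A ∩ B) ≥ 1 - ε₁ / (1 - ε₂) := by
  have hfin : ∀ S : Set Ω, P S ≠ ⊤ := fun S => measure_ne_top P S
  have hPA : 0 < P A := lt_of_lt_of_le hPAB (measure_mono Set.inter_subset_left)
  have ha : 0 < (P A).toReal := ENNReal.toReal_pos hPA.ne' (hfin A)
  have hab : 0 < (P (A ∩ B)).toReal := ENNReal.toReal_pos hPAB.ne' (hfin _)
  -- from h1 : (P (C ∩ A)).toReal ≥ (1 - ε₁) * (P A).toReal
  have h1' : (1 - ε₁) * (P A).toReal ≤ (P (C ∩ A)).toReal := by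
    have := h1
    unfold condProb at this
    exact (le_div_iff₀ ha).mp this
  have h2' : (1 - ε₂) * (P A).toReal ≤ (P (B ∩ A)).toReal := by
    have := h2
    unfold condProb at this
    exact (le_div_iff₀ ha).mp this
  have hBA : (P (B ∩ A)).toReal = (P (A ∩ B)).toReal := by rw [Set.inter_comm]
  -- P(C ∩ A) ≤ P(C ∩ (A ∩ B)) + (P A - P (A ∩ B))
  have hdiff : (P (A \ B)).toReal = (P A).toReal - (P (A ∩ B)).toReal := by
    have : A \ B = A \ (A ∩ B) := (Set.diff_self_inter).symm
    rw [this, measure_diff Set.inter_subset_left (hA.inter hB).nullMeasurableSet (hfin _),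
      ENNReal.toReal_sub_of_le (measure_mono Set.inter_subset_left) (hfin A)]
  have hsub : (P (C ∩ A)).toReal ≤ (P (C ∩ (A ∩ B))).toReal + (P (A \ B)).toReal := by
    have hsubset : C ∩ A ⊆ (C ∩ (A ∩ B)) ∪ (A \ B) := by
      intro x hx
      by_cases hxB : x ∈ B
      · exact Or.inl ⟨hx.1, hx.2, hxB⟩
      · exact Or.inr ⟨hx.2, hxB⟩
    calc (P (C ∩ A)).toReal ≤ (P ((C ∩ (A ∩ B)) ∪ (A \ B))).toReal := by
          exact ENNReal.toReal_mono (hfin _) (measure_mono hsubset)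
      _ ≤ (P (C ∩ (A ∩ B))).toReal + (P (A \ B)).toReal := by
          rw [← ENNReal.toReal_add (hfin _) (hfin _)]
          exact ENNReal.toReal_mono (by simp [hfin]) (measure_union_le _ _)
  unfold condProb
  rw [ge_iff_le, le_div_iff₀ hab]
  have hε₂' : 0 < 1 - ε₂ := by linarith [hε₂.2]
  have key : ε₁ * (P A).toReal ≤ ε₁ / (1 - ε₂) * (P (A ∩ B)).toReal := by
    rw [div_mul_eq_mul_div, le_div_iff₀ hε₂']
    nlinarith [hε₁.1, h2', hBA]
  rw [hdiff] at hsub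
  nlinarith [hsub, h1', key]
end

section
/- (Or rule with ε-values.) Let P be a probability measure, let A, B, C be measurable events with P(A) > 0 and P(B) > 0, and let ε₁, ε₂ ∈ [0,1] with ε₁·ε₂ < 1. If P(C|A) ≥ 1 - ε₁ and P(C|B) ≥ 1 - ε₂, then P(C | A ∪ B) ≥ 1 - (ε₁ + ε₂ - 2·ε₁·ε₂)/(1 - ε₁·ε₂). -/
/-!
The failure mass `P((A ∪ B) \ C)` is at most `P(A \ C) + P(B \ C) ≤ ε₁ P(A) + ε₂ P(B)`, while the
success mass `P((A ∪ B) ∩ C)` is at least `(1 - ε₁) P(A)` and at least `(1 - ε₂) P(B)`. A suitable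
nonnegative combination of these three linear bounds eliminates `P(A)` and `P(B)`.
-/

open MeasureTheory

noncomputable def orRuleError (ε₁ ε₂ : ℝ) : ℝ :=
  (ε₁ + ε₂ - 2 * (ε₁ * ε₂)) / (1 - ε₁ * ε₂)

/-- Weight `ha`, `hb`, `hm` by `ε₁ (1 - ε₂)`, `ε₂ (1 - ε₁)`, `(1 - ε₁) (1 - ε₂)`; the weights
sum to `1 - ε₁ ε₂`, and `a`, `b` cancel. -/
theorem le_orRuleError_mul {ε₁ ε₂ a b u m : ℝ} (hε₁ : ε₁ ∈ Set.Icc (0 : ℝ) 1)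
    (hε₂ : ε₂ ∈ Set.Icc (0 : ℝ) 1) (hεε : ε₁ * ε₂ < 1) (hm : m ≤ ε₁ * a + ε₂ * b)
    (ha : (1 - ε₁) * a ≤ u - m) (hb : (1 - ε₂) * b ≤ u - m) :
    m ≤ orRuleError ε₁ ε₂ * u := by
  obtain ⟨hε₁0, hε₁1⟩ := hε₁
  obtain ⟨hε₂0, hε₂1⟩ := hε₂
  rw [orRuleError, div_mul_eq_mul_div, le_div_iff₀ (by linarith)]
  nlinarith [mul_le_mul_of_nonneg_left ha (mul_nonneg hε₁0 (sub_nonneg.2 hε₂1)),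
    mul_le_mul_of_nonneg_left hb (mul_nonneg hε₂0 (sub_nonneg.2 hε₁1)),
    mul_le_mul_of_nonneg_left hm (mul_nonneg (sub_nonneg.2 hε₁1) (sub_nonneg.2 hε₂1))]

section condProb

variable {Ω : Type*} [MeasurableSpace Ω] {P : Measure Ω} [IsFiniteMeasure P] {C H K : Set Ω}

theorem one_sub_le_condProb_iff (hC : MeasurableSet C) (hH : 0 < P H) (ε : ℝ) :
    1 - ε ≤ condProb P C H ↔ P.real (H \ C) ≤ ε * P.real H := by
  have hH' : 0 < P.real H := ENNReal.toReal_pos hH.ne' (measure_ne_top P H)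
  have hsplit := measureReal_inter_add_sdiff (μ := P) (s := H) hC
  rw [condProb, ← measureReal_def, ← measureReal_def, le_div_iff₀ hH', Set.inter_comm]
  constructor <;> intro <;> linarith

theorem measureReal_sub_measureReal_sdiff_mono (hC : MeasurableSet C) (hHK : H ⊆ K) :
    P.real H - P.real (H \ C) ≤ P.real K - P.real (K \ C) := by
  rw [← measureReal_inter_add_sdiff (μ := P) (s := H) hC, ← measureReal_inter_add_sdiff (μ := P) (s := K) hC,
    add_sub_cancel_right, add_sub_cancel_right]
  exact measureReal_mono (Set.inter_subset_inter_left C hHK)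

end condProb

theorem or_rule_eps_general {Ω : Type*} [MeasurableSpace Ω] (P : Measure Ω)
    [IsProbabilityMeasure P] (A B C : Set Ω)
    (hC : MeasurableSet C)
    (hPA : 0 < P A) (hPB : 0 < P B) (ε₁ ε₂ : ℝ)
    (hε₁ : ε₁ ∈ Set.Icc (0 : ℝ) 1) (hε₂ : ε₂ ∈ Set.Icc (0 : ℝ) 1) (hεε : ε₁ * ε₂ < 1)
    (h1 : condProb P C A ≥ 1 - ε₁) (h2 : condProb P C B ≥ 1 - ε₂) :
    condProb P C (A ∪ B) ≥ 1 - (ε₁ + ε₂ - 2 * (ε₁ * ε₂)) / (1 - ε₁ * ε₂) := by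
  have hPAB : 0 < P (A ∪ B) := hPA.trans_le (measure_mono Set.subset_union_left)
  rw [ge_iff_le, one_sub_le_condProb_iff hC hPA] at h1
  rw [ge_iff_le, one_sub_le_condProb_iff hC hPB] at h2
  have hA : P.real A - P.real (A \ C) ≤ P.real (A ∪ B) - P.real ((A ∪ B) \ C) :=
    measureReal_sub_measureReal_sdiff_mono hC Set.subset_union_left
  have hB : P.real B - P.real (B \ C) ≤ P.real (A ∪ B) - P.real ((A ∪ B) \ C) :=
    measureReal_sub_measureReal_sdiff_mono hC Set.subset_union_right
  refine (one_sub_le_condProb_iff hC hPAB _).2 <|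
    le_orRuleError_mul (a := P.real A) (b := P.real B) hε₁ hε₂ hεε ?_ (by linarith) (by linarith)
  calc P.real ((A ∪ B) \ C) ≤ P.real (A \ C) + P.real (B \ C) := by
        rw [Set.union_sdiff_distrib]; exact measureReal_union_le _ _
    _ ≤ ε₁ * P.real A + ε₂ * P.real B := add_le_add h1 h2

/-- Or rule with ε-values. -/
theorem or_rule_eps {Ω : Type*} [MeasurableSpace Ω] (P : Measure Ω)
    [IsProbabilityMeasure P] (A B C : Set Ω)
    (hA : MeasurableSet A) (hB : MeasurableSet B) (hC : MeasurableSet C)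
    (hPA : 0 < P A) (hPB : 0 < P B) (ε₁ ε₂ : ℝ)
    (hε₁ : ε₁ ∈ Set.Icc (0 : ℝ) 1) (hε₂ : ε₂ ∈ Set.Icc (0 : ℝ) 1) (hεε : ε₁ * ε₂ < 1)
    (h1 : condProb P C A ≥ 1 - ε₁) (h2 : condProb P C B ≥ 1 - ε₂) :
    condProb P C (A ∪ B) ≥ 1 - (ε₁ + ε₂ - 2 * (ε₁ * ε₂)) / (1 - ε₁ * ε₂) :=
  or_rule_eps_general P A B C hC hPA hPB ε₁ ε₂ hε₁ hε₂ hεε h1 h2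
end

section
/- (Upper-bound propagation for the Cautious Monotonicity rule.) Let P be a probability measure, let A, B, C be measurable events with P(A ∩ B) > 0, and let β₁, α₂ be real numbers with 0 < α₂ and β₁ < α₂. If P(C|A) ≤ β₁ and P(B|A) ≥ α₂, then P(C | A ∩ B) ≤ β₁/α₂. -/
open MeasureTheory

/-- Upper-bound propagation for the Cautious Monotonicity rule. -/
theorem cautious_monotonicity_upper {Ω : Type*} [MeasurableSpace Ω] (P : Measure Ω)
    [IsProbabilityMeasure P] (A B C : Set Ω)
    (hA : MeasurableSet A) (hB : MeasurableSet B) (hC : MeasurableSet C)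
    (hPAB : 0 < P (A ∩ B)) (β₁ α₂ : ℝ) (hα₂ : 0 < α₂) (hβα : β₁ < α₂)
    (h1 : condProb P C A ≤ β₁) (h2 : condProb P B A ≥ α₂) :
    condProb P C (A ∩ B) ≤ β₁ / α₂ := by
  unfold condProb at *
  set a := (P A).toReal with ha
  set ab := (P (A ∩ B)).toReal with hab
  set ca := (P (C ∩ A)).toReal with hca
  set cab := (P (C ∩ (A ∩ B))).toReal with hcab
  have hfin : ∀ S : Set Ω, P S ≠ ⊤ := fun S => measure_ne_top P S
  have hab0 : 0 < ab := ENNReal.toReal_pos hPAB.ne' (hfin _)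
  have hale : ab ≤ a := ENNReal.toReal_mono (hfin _) (measure_mono Set.inter_subset_left)
  have ha0 : 0 < a := lt_of_lt_of_le hab0 hale
  have hmono : cab ≤ ca :=
    ENNReal.toReal_mono (hfin _) (measure_mono (Set.inter_subset_inter_right _ Set.inter_subset_left))
  have hca0 : 0 ≤ ca := ENNReal.toReal_nonneg
  have hcab0 : 0 ≤ cab := ENNReal.toReal_nonneg
  have hba : (P (B ∩ A)).toReal = ab := by rw [hab, Set.inter_comm]
  have h1' : ca ≤ β₁ * a := by
    rw [div_le_iff₀ ha0] at h1; linarith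
  have h2' : α₂ * a ≤ ab := by
    rw [ge_iff_le, le_div_iff₀ ha0, hba] at h2; linarith
  have hβ0 : 0 ≤ β₁ := by
    by_contra h
    push_neg at h
    nlinarith
  rw [div_le_div_iff₀ hab0 hα₂]
  nlinarith
end

section
/- (Probabilistic entailment verification for the Or rule.) Let α₃ ∈ (0,1] and α₁ ∈ [α₃, 1] be real numbers, and set α₂ = α₁·α₃/(α₁·(1 + α₃) - α₃) (the denominator is positive since α₁ ≥ α₃ > 0). Let P be a probability measure and A, B, C measurable events with P(A) > 0 and P(B) > 0. If P(C|A) ≥ α₁ and P(C|B) ≥ α₂, then P(C | A ∪ B) ≥ α₃. -/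
open MeasureTheory

/-!
Write `a, b, w, D` for the probabilities of `A, B, A ∩ B, A ∪ B`, and `x, y, N` for those of
`C ∩ A, C ∩ B, C ∩ (A ∪ B)`. Submodularity of `P` gives `D ≤ a + b - w`; cutting `C ∩ (A ∪ B)`
along the measurable set `B` gives `x + y ≤ N + w`; and `x, y ≤ N`. With `d = α₁ (1 + α₃) - α₃`
the hypotheses read `α₁ a ≤ x` and `α₁ α₃ b ≤ d y`, and the combination
`α₁ N ≥ α₁ α₃ (x + y - w) + α₃ (1 - α₁) x + (α₁ - α₃) y = α₃ x + d y - α₁ α₃ w ≥ α₁ α₃ (a + b - w)`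
gives `α₃ D ≤ N`.
-/
namespace MeasureTheory

variable {Ω : Type*} [MeasurableSpace Ω]

theorem measure_union_add_inter_le (μ : Measure Ω) (s t : Set Ω) :
    μ (s ∪ t) + μ (s ∩ t) ≤ μ s + μ t :=
  calc μ (s ∪ t) + μ (s ∩ t)
      ≤ μ (s ∪ toMeasurable μ t) + μ (s ∩ toMeasurable μ t) := by
        gcongr <;> exact subset_toMeasurable μ t
    _ = μ s + μ t := by
        rw [measure_union_add_inter s (measurableSet_toMeasurable μ t), measure_toMeasurable]

theorem measureReal_union_add_inter_le (μ : Measure Ω) [IsFiniteMeasure μ] (s t : Set Ω) :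
    μ.real (s ∪ t) + μ.real (s ∩ t) ≤ μ.real s + μ.real t := by
  simp only [measureReal_def]
  rw [← ENNReal.toReal_add (by finiteness) (by finiteness),
    ← ENNReal.toReal_add (by finiteness) (by finiteness)]
  exact ENNReal.toReal_mono (by finiteness) (measure_union_add_inter_le μ s t)

theorem measureReal_inter_union_add_inter_inter (μ : Measure Ω) [IsFiniteMeasure μ] (u s : Set Ω)
    {t : Set Ω} (ht : MeasurableSet t) :
    μ.real (u ∩ (s ∪ t)) + μ.real (u ∩ s ∩ t) = μ.real (u ∩ s) + μ.real (u ∩ t) := by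
  rw [← measureReal_inter_add_sdiff ht (s := u ∩ (s ∪ t)),
    ← measureReal_inter_add_sdiff ht (s := u ∩ s)]
  have hin : u ∩ (s ∪ t) ∩ t = u ∩ t := by grind
  have hout : (u ∩ (s ∪ t)) \ t = (u ∩ s) \ t := by grind
  rw [hin, hout]
  ring

end MeasureTheory

section CondProb

variable {Ω : Type*} [MeasurableSpace Ω] {P : Measure Ω} {E H : Set Ω} {c : ℝ}

theorem le_condProb_iff (hH : 0 < P.real H) : c ≤ condProb P E H ↔ c * P.real H ≤ P.real (E ∩ H) :=
  le_div_iff₀ hH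

theorem mul_measureReal_le_of_le_condProb (h : c ≤ condProb P E H) :
    c * P.real H ≤ P.real (E ∩ H) := by
  rcases measureReal_nonneg.eq_or_lt with hH | hH
  · rw [← hH, mul_zero]
    exact measureReal_nonneg
  · exact (le_condProb_iff hH).mp h

end CondProb

theorem or_rule_measureReal {Ω : Type*} [MeasurableSpace Ω] (P : Measure Ω) [IsFiniteMeasure P]
    {α₁ α₃ : ℝ} (hα₃ : 0 < α₃) (hα₃₁ : α₃ ≤ α₁) (hα₁ : α₁ ≤ 1) {A B C : Set Ω}
    (hB : MeasurableSet B) (hCA : α₁ * P.real A ≤ P.real (C ∩ A))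
    (hCB : α₁ * α₃ / (α₁ * (1 + α₃) - α₃) * P.real B ≤ P.real (C ∩ B)) :
    α₃ * P.real (A ∪ B) ≤ P.real (C ∩ (A ∪ B)) := by
  have hα₁₀ : 0 < α₁ := hα₃.trans_le hα₃₁
  have hd : 0 < α₁ * (1 + α₃) - α₃ := by nlinarith
  have hCB' : α₁ * α₃ * P.real B ≤ (α₁ * (1 + α₃) - α₃) * P.real (C ∩ B) := by
    simpa only [← mul_assoc, mul_div_cancel₀ _ hd.ne'] using mul_le_mul_of_nonneg_left hCB hd.le
  have hunion := measureReal_union_add_inter_le P A B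
  have hCunion : P.real (C ∩ A) + P.real (C ∩ B) ≤ P.real (C ∩ (A ∪ B)) + P.real (A ∩ B) := by
    rw [← measureReal_inter_union_add_inter_inter P C A hB]
    exact add_le_add le_rfl (measureReal_mono (Set.inter_subset_inter_left B Set.inter_subset_right))
  have hCA_le : P.real (C ∩ A) ≤ P.real (C ∩ (A ∪ B)) :=
    measureReal_mono (Set.inter_subset_inter_right C Set.subset_union_left)
  have hCB_le : P.real (C ∩ B) ≤ P.real (C ∩ (A ∪ B)) :=
    measureReal_mono (Set.inter_subset_inter_right C Set.subset_union_right)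
  refine le_of_mul_le_mul_left ?_ hα₁₀
  linarith [mul_le_mul_of_nonneg_left hunion (mul_pos hα₁₀ hα₃).le,
    mul_le_mul_of_nonneg_left hCA hα₃.le,
    mul_le_mul_of_nonneg_left hCunion (mul_pos hα₁₀ hα₃).le,
    mul_le_mul_of_nonneg_left hCA_le (mul_nonneg hα₃.le (sub_nonneg.2 hα₁)),
    mul_le_mul_of_nonneg_left hCB_le (sub_nonneg.2 hα₃₁)]

theorem or_rule_entailment_general (α₃ α₁ : ℝ)
    (hα₃ : α₃ ∈ Set.Ioc (0 : ℝ) 1) (hα₁ : α₁ ∈ Set.Icc α₃ 1)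
    {Ω : Type*} [MeasurableSpace Ω] (P : Measure Ω) [IsProbabilityMeasure P]
    (A B C : Set Ω)
    (hB : MeasurableSet B)
    (hPA : 0 < P A)
    (h1 : condProb P C A ≥ α₁)
    (h2 : condProb P C B ≥ α₁ * α₃ / (α₁ * (1 + α₃) - α₃)) :
    condProb P C (A ∪ B) ≥ α₃ := by
  have hAB : 0 < P.real (A ∪ B) :=
    (ENNReal.toReal_pos hPA.ne' (by finiteness)).trans_le (measureReal_mono Set.subset_union_left)
  rw [ge_iff_le, le_condProb_iff hAB]
  exact or_rule_measureReal P hα₃.1 hα₁.1 hα₁.2 hB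
    (mul_measureReal_le_of_le_condProb h1) (mul_measureReal_le_of_le_condProb h2)

/-- Probabilistic entailment verification for the Or rule. -/
theorem or_rule_entailment (α₃ α₁ : ℝ)
    (hα₃ : α₃ ∈ Set.Ioc (0 : ℝ) 1) (hα₁ : α₁ ∈ Set.Icc α₃ 1)
    {Ω : Type*} [MeasurableSpace Ω] (P : Measure Ω) [IsProbabilityMeasure P]
    (A B C : Set Ω)
    (hA : MeasurableSet A) (hB : MeasurableSet B) (hC : MeasurableSet C)
    (hPA : 0 < P A) (hPB : 0 < P B)
    (h1 : condProb P C A ≥ α₁)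
    (h2 : condProb P C B ≥ α₁ * α₃ / (α₁ * (1 + α₃) - α₃)) :
    condProb P C (A ∪ B) ≥ α₃ :=
  or_rule_entailment_general α₃ α₁ hα₃ hα₁ P A B C hB hPA h1 h2
end

section
/- (Lower-bound propagation for the disjunctive Weak Rational Monotony rule.) Let P be a probability measure, let A, B, C be measurable events with P(A ∩ B) > 0, and let α₁, β₂ be real numbers with β₂ < 1 and α₁ ≥ β₂. If P(C|A) ≥ α₁ and P(Bᶜ|A) ≤ β₂, where Bᶜ denotes the complement of B, then P(C | A ∩ B) ≥ (α₁ - β₂)/(1 - β₂). -/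
open MeasureTheory

/-- Lower-bound propagation for the disjunctive Weak Rational Monotony rule. -/
theorem dWRM_lower {Ω : Type*} [MeasurableSpace Ω] (P : Measure Ω)
    [IsProbabilityMeasure P] (A B C : Set Ω)
    (hA : MeasurableSet A) (hB : MeasurableSet B) (hC : MeasurableSet C)
    (hPAB : 0 < P (A ∩ B)) (α₁ β₂ : ℝ) (hβ₂ : β₂ < 1) (hαβ : α₁ ≥ β₂)
    (h1 : condProb P C A ≥ α₁) (h2 : condProb P Bᶜ A ≤ β₂) :
    condProb P C (A ∩ B) ≥ (α₁ - β₂) / (1 - β₂) := by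
  have hfin : ∀ s : Set Ω, P s ≠ ⊤ := fun s => measure_ne_top P s
  set a := (P A).toReal with ha_def
  set ab := (P (A ∩ B)).toReal with hab_def
  set c := (P (C ∩ A)).toReal with hc_def
  set w := (P (Cᶜ ∩ A)).toReal with hw_def
  set z := (P (Cᶜ ∩ (A ∩ B))).toReal with hz_def
  set x := (P (C ∩ (A ∩ B))).toReal with hx_def
  set bc := (P (Bᶜ ∩ A)).toReal with hbc_def
  have e1 : c + w = a := by
    rw [hc_def, hw_def, ha_def, ← ENNReal.toReal_add (hfin _) (hfin _)]
    congr 1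
    rw [Set.inter_comm C A, Set.inter_comm Cᶜ A, ← Set.diff_eq]
    exact measure_inter_add_diff A hC
  have e2 : ab + bc = a := by
    rw [hab_def, hbc_def, ha_def, ← ENNReal.toReal_add (hfin _) (hfin _)]
    congr 1
    rw [Set.inter_comm Bᶜ A, ← Set.diff_eq]
    exact measure_inter_add_diff A hB
  have e3 : x + z = ab := by
    rw [hx_def, hz_def, hab_def, ← ENNReal.toReal_add (hfin _) (hfin _)]
    congr 1
    rw [Set.inter_comm C (A ∩ B), Set.inter_comm Cᶜ (A ∩ B), ← Set.diff_eq]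
    exact measure_inter_add_diff (A ∩ B) hC
  have hzw : z ≤ w :=
    ENNReal.toReal_mono (hfin _) (measure_mono (Set.inter_subset_inter_right _ Set.inter_subset_left))
  have hab_pos : 0 < ab := ENNReal.toReal_pos hPAB.ne' (hfin _)
  have haba : ab ≤ a :=
    ENNReal.toReal_mono (hfin _) (measure_mono Set.inter_subset_left)
  have ha_pos : 0 < a := lt_of_lt_of_le hab_pos haba
  have hca : c ≤ a :=
    ENNReal.toReal_mono (hfin _) (measure_mono Set.inter_subset_right)
  have hz0 : 0 ≤ z := ENNReal.toReal_nonneg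
  have hbc0 : 0 ≤ bc := ENNReal.toReal_nonneg
  simp only [condProb] at h1 h2 ⊢
  rw [ge_iff_le, le_div_iff₀ ha_pos] at h1
  rw [div_le_iff₀ ha_pos] at h2
  have hα1 : α₁ ≤ 1 := by nlinarith
  rw [ge_iff_le, div_le_div_iff₀ (by linarith) hab_pos]
  nlinarith [mul_nonneg (sub_nonneg.2 hα1) (by nlinarith : (0:ℝ) ≤ ab - (1 - β₂) * a),
    mul_nonneg (by linarith : (0:ℝ) ≤ 1 - β₂) (by nlinarith : (0:ℝ) ≤ (1 - α₁) * a - z)]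
end
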